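/- arXiv:1310.0939 — 3 statements merged into one kernel-verified Lean document; each statement's English description precedes it below -/
import Mathlib

section
/- Let Y be a nonnegative random variable with S(z) := P[Y ≥ z] ≤ 4(1 - N((z - M - c)/√M)) for all z ≥ 0, where M, c > 0 and N is the standard normal CDF. Then for every R > M + c, E[Y·1_{Y ≥ R}] = R·S(R) + ∫_R^∞ S(z) dz ≤ 4(c + M)(1 - N((R-M-c)/√M)) + (4√M/√(2π)) exp(-(R-M-c)²/(2M)). -/
/-!
By the layer-cake formula, `E[Y·1_{Y ≥ R}]` is the integral over `t > 0` of `P[Y ≥ max t R]`, which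
splits into the box `R·S(R)` and the tail `∫_R^∞ S`. After bounding `S` by the Gaussian tail, that
integral is computed exactly through the standard normal loss function
`L(x) = φ(x) - x(1 - Φ(x))`: `L' = Φ - 1` and, by Mills' inequality `x(1 - Φ(x)) ≤ φ(x)`,
`L → 0` at `∞`, so `∫_R^∞ (1 - Φ((z - a)/s)) dz = s L((R - a)/s)`. The terms `±R(1 - Φ)` cancel,
leaving `a(1 - Φ) + sφ` with `a = M + c`, `s = √M`.
-/

open MeasureTheory Real Set

/-- Standard normal cumulative distribution function. -/
noncomputable def stdNormalCDF (x : ℝ) : ℝ :=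
  ∫ t in Set.Iic x, (Real.sqrt (2 * Real.pi))⁻¹ * Real.exp (-t ^ 2 / 2)

open Filter Topology ProbabilityTheory

noncomputable def stdNormalPDF (x : ℝ) : ℝ := (√(2 * π))⁻¹ * exp (-x ^ 2 / 2)

lemma stdNormalPDF_eq_gaussianPDFReal : stdNormalPDF = gaussianPDFReal 0 1 := by
  ext x
  simp [stdNormalPDF, gaussianPDFReal]

lemma stdNormalPDF_nonneg (x : ℝ) : 0 ≤ stdNormalPDF x := by
  rw [stdNormalPDF_eq_gaussianPDFReal]
  exact gaussianPDFReal_nonneg 0 1 x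

lemma integrable_stdNormalPDF : Integrable stdNormalPDF := by
  rw [stdNormalPDF_eq_gaussianPDFReal]
  exact integrable_gaussianPDFReal 0 1

lemma continuous_stdNormalPDF : Continuous stdNormalPDF := by
  unfold stdNormalPDF
  fun_prop

lemma hasDerivAt_stdNormalPDF (x : ℝ) : HasDerivAt stdNormalPDF (-x * stdNormalPDF x) x := by
  have h : HasDerivAt stdNormalPDF _ x :=
    (((hasDerivAt_pow 2 x).fun_neg.div_const 2).exp).const_mul (√(2 * π))⁻¹
  refine h.congr_deriv ?_
  simp only [stdNormalPDF]
  ring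

lemma tendsto_stdNormalPDF_atTop : Tendsto stdNormalPDF atTop (𝓝 0) := by
  unfold stdNormalPDF
  have h : Tendsto (fun x : ℝ => -x ^ 2 / 2) atTop atBot := by
    simpa only [neg_div, Function.comp_def] using
      tendsto_neg_atTop_atBot.comp ((tendsto_pow_atTop two_ne_zero).atTop_div_const two_pos)
  simpa only [mul_zero] using (tendsto_exp_comp_nhds_zero.mpr h).const_mul (√(2 * π))⁻¹

lemma one_sub_stdNormalCDF (x : ℝ) : 1 - stdNormalCDF x = ∫ t in Ioi x, stdNormalPDF t := by
  have h := integral_add_compl (measurableSet_Iic (a := x)) integrable_stdNormalPDF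
  rw [compl_Iic, stdNormalPDF_eq_gaussianPDFReal,
    integral_gaussianPDFReal_eq_one 0 one_ne_zero] at h
  rw [← h, stdNormalPDF_eq_gaussianPDFReal, stdNormalCDF, ← stdNormalPDF_eq_gaussianPDFReal]
  simp only [stdNormalPDF, add_sub_cancel_left]

lemma stdNormalCDF_le_one (x : ℝ) : stdNormalCDF x ≤ 1 := by
  have : 0 ≤ ∫ t in Ioi x, stdNormalPDF t :=
    setIntegral_nonneg measurableSet_Ioi fun t _ => stdNormalPDF_nonneg t
  linarith [one_sub_stdNormalCDF x]

lemma one_sub_stdNormalCDF_nonneg (x : ℝ) : 0 ≤ 1 - stdNormalCDF x :=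
  sub_nonneg.mpr (stdNormalCDF_le_one x)

lemma hasDerivAt_stdNormalCDF (x : ℝ) : HasDerivAt stdNormalCDF (stdNormalPDF x) x := by
  have hΦ : ∀ u, stdNormalCDF u = stdNormalCDF 0 + ∫ t in (0 : ℝ)..u, stdNormalPDF t := by
    intro u
    rw [← intervalIntegral.integral_Iic_sub_Iic integrable_stdNormalPDF.integrableOn
      integrable_stdNormalPDF.integrableOn]
    simp only [stdNormalCDF, stdNormalPDF]
    ring
  rw [funext hΦ]
  exact (intervalIntegral.integral_hasDerivAt_right integrable_stdNormalPDF.intervalIntegrable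
    (continuous_stdNormalPDF.stronglyMeasurableAtFilter _ _)
    continuous_stdNormalPDF.continuousAt).const_add _

lemma mul_one_sub_stdNormalCDF_le (x : ℝ) : x * (1 - stdNormalCDF x) ≤ stdNormalPDF x := by
  rcases lt_or_ge x 0 with hx | hx
  · nlinarith [stdNormalCDF_le_one x, stdNormalPDF_nonneg x]
  have hderiv : ∀ t ∈ Ici x, HasDerivAt (fun t => -stdNormalPDF t) (t * stdNormalPDF t) t :=
    fun t _ => by simpa using (hasDerivAt_stdNormalPDF t).fun_neg
  have hnonneg : ∀ t ∈ Ioi x, 0 ≤ t * stdNormalPDF t := fun t ht =>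
    mul_nonneg (hx.trans ht.out.le) (stdNormalPDF_nonneg t)
  have hlim : Tendsto (fun t => -stdNormalPDF t) atTop (𝓝 0) := by
    simpa using tendsto_stdNormalPDF_atTop.neg
  calc x * (1 - stdNormalCDF x) = ∫ t in Ioi x, x * stdNormalPDF t := by
        rw [one_sub_stdNormalCDF, integral_const_mul]
    _ ≤ ∫ t in Ioi x, t * stdNormalPDF t :=
        setIntegral_mono_on (integrable_stdNormalPDF.integrableOn.const_mul x)
          (integrableOn_Ioi_deriv_of_nonneg' hderiv hnonneg hlim) measurableSet_Ioi
          fun t ht => mul_le_mul_of_nonneg_right ht.out.le (stdNormalPDF_nonneg t)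
    _ = stdNormalPDF x := by
        rw [integral_Ioi_of_hasDerivAt_of_nonneg' hderiv hnonneg hlim]
        ring

/-- The standard normal loss function `x ↦ 𝔼[(Z - x)⁺]`, `Z ∼ 𝓝(0, 1)`. -/
noncomputable def stdNormalLoss (x : ℝ) : ℝ := stdNormalPDF x - x * (1 - stdNormalCDF x)

lemma hasDerivAt_stdNormalLoss (x : ℝ) : HasDerivAt stdNormalLoss (stdNormalCDF x - 1) x := by
  have h := (hasDerivAt_stdNormalPDF x).sub ((hasDerivAt_id x).mul
    ((hasDerivAt_stdNormalCDF x).const_sub 1))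
  refine h.congr_deriv ?_
  simp only [id]
  ring

lemma tendsto_stdNormalLoss_atTop : Tendsto stdNormalLoss atTop (𝓝 0) := by
  have hmul : Tendsto (fun x => x * (1 - stdNormalCDF x)) atTop (𝓝 0) := by
    refine tendsto_of_tendsto_of_tendsto_of_le_of_le' tendsto_const_nhds
      tendsto_stdNormalPDF_atTop ?_ (Eventually.of_forall mul_one_sub_stdNormalCDF_le)
    filter_upwards [eventually_ge_atTop 0] with x hx
    exact mul_nonneg hx (one_sub_stdNormalCDF_nonneg x)
  have h := tendsto_stdNormalPDF_atTop.sub hmul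
  rw [sub_zero] at h
  exact h

section Rescaled

variable (a : ℝ) {s : ℝ}

lemma hasDerivAt_neg_mul_stdNormalLoss_div (hs : s ≠ 0) (z : ℝ) :
    HasDerivAt (fun z => -(s * stdNormalLoss ((z - a) / s)))
      (1 - stdNormalCDF ((z - a) / s)) z := by
  have h := (((hasDerivAt_stdNormalLoss _).comp z
    (((hasDerivAt_id z).sub_const a).div_const s)).const_mul s).neg
  refine h.congr_deriv ?_
  rw [id, mul_comm (_ - 1), ← mul_assoc, mul_one_div_cancel hs, one_mul, neg_sub]

lemma tendsto_neg_mul_stdNormalLoss_div_atTop (hs : 0 < s) :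
    Tendsto (fun z => -(s * stdNormalLoss ((z - a) / s))) atTop (𝓝 0) := by
  have h : Tendsto (fun z => (z - a) / s) atTop atTop :=
    (tendsto_atTop_add_const_right _ (-a) tendsto_id).atTop_div_const hs
  simpa using ((tendsto_stdNormalLoss_atTop.comp h).const_mul s).neg

lemma integrableOn_Ioi_one_sub_stdNormalCDF_div (hs : 0 < s) (R : ℝ) :
    IntegrableOn (fun z => 1 - stdNormalCDF ((z - a) / s)) (Ioi R) :=
  integrableOn_Ioi_deriv_of_nonneg'
    (fun z _ => hasDerivAt_neg_mul_stdNormalLoss_div a hs.ne' z)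
    (fun _ _ => one_sub_stdNormalCDF_nonneg _) (tendsto_neg_mul_stdNormalLoss_div_atTop a hs)

lemma integral_Ioi_one_sub_stdNormalCDF_div (hs : 0 < s) (R : ℝ) :
    ∫ z in Ioi R, (1 - stdNormalCDF ((z - a) / s)) = s * stdNormalLoss ((R - a) / s) := by
  rw [integral_Ioi_of_hasDerivAt_of_nonneg'
    (fun z _ => hasDerivAt_neg_mul_stdNormalLoss_div a hs.ne' z)
    (fun _ _ => one_sub_stdNormalCDF_nonneg _) (tendsto_neg_mul_stdNormalLoss_div_atTop a hs)]
  ring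

end Rescaled

lemma setOf_le_indicator_setOf_le {Ω : Type*} {Y : Ω → ℝ} {R t : ℝ} (ht : 0 < t) :
    {ω | t ≤ {ω | R ≤ Y ω}.indicator Y ω} = {ω | max t R ≤ Y ω} := by
  ext ω
  by_cases h : R ≤ Y ω
  · simp [h]
  · simp [h, ht.not_ge]

section TailExpectation

variable {Ω : Type*} [MeasurableSpace Ω] {μ : Measure Ω}

lemma integrableOn_Ioi_measureReal_le {f : Ω → ℝ} (hf : Integrable f μ) (hf_nn : 0 ≤ᵐ[μ] f) :
    IntegrableOn (fun t => μ.real {ω | t ≤ f ω}) (Ioi 0) := by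
  have hfin : ∫⁻ t in Ioi 0, μ {ω | t ≤ f ω} ≠ ⊤ := by
    rw [← lintegral_eq_lintegral_meas_le μ hf_nn hf.aemeasurable]
    exact hf.lintegral_lt_top.ne
  have hanti : Antitone fun t => μ {ω | t ≤ f ω} := fun _ _ hst =>
    measure_mono fun _ h => hst.trans h
  exact integrable_toReal_of_lintegral_ne_top hanti.measurable.aemeasurable hfin

theorem integral_indicator_setOf_le {Y : Ω → ℝ} (hY : Measurable Y) (hYint : Integrable Y μ)
    {R : ℝ} (hR : 0 < R) :
    ∫ ω, {ω | R ≤ Y ω}.indicator Y ω ∂μ =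
      R * μ.real {ω | R ≤ Y ω} + ∫ z in Ioi R, μ.real {ω | z ≤ Y ω} := by
  set g := {ω | R ≤ Y ω}.indicator Y
  have hg : Integrable g μ := hYint.indicator (measurableSet_le measurable_const hY)
  have hg_nn : 0 ≤ᵐ[μ] g :=
    Eventually.of_forall (indicator_nonneg fun ω (h : R ≤ Y ω) => hR.le.trans h)
  have hint := integrableOn_Ioi_measureReal_le hg hg_nn
  have hlevel : ∀ t ∈ Ioi (0 : ℝ), μ.real {ω | t ≤ g ω} = μ.real {ω | max t R ≤ Y ω} :=
    fun t ht => by rw [setOf_le_indicator_setOf_le ht]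
  rw [hg.integral_eq_integral_meas_le hg_nn, ← Ioc_union_Ioi_eq_Ioi hR.le,
    setIntegral_union (Ioc_disjoint_Ioi le_rfl) measurableSet_Ioi
      (hint.mono_set Ioc_subset_Ioi_self) (hint.mono_set (Ioi_subset_Ioi hR.le)),
    setIntegral_congr_fun measurableSet_Ioc
      fun t ht => (hlevel t ht.1).trans (by rw [max_eq_right ht.2]),
    setIntegral_congr_fun measurableSet_Ioi
      fun t ht => (hlevel t (hR.trans ht)).trans (by rw [max_eq_left ht.out.le]),
    setIntegral_const, volume_real_Ioc_of_le hR.le, sub_zero, smul_eq_mul]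

end TailExpectation

theorem tail_expectation_bound_general
    {Ω : Type*} [MeasurableSpace Ω] (μ : Measure Ω)
    (Y : Ω → ℝ) (hYmeas : Measurable Y)
    (hYint : Integrable Y μ)
    (M c R : ℝ) (hM : 0 < M) (hc : 0 < c) (hR : M + c < R)
    (S : ℝ → ℝ) (hS : ∀ z, S z = (μ {ω | z ≤ Y ω}).toReal)
    (htail : ∀ z : ℝ, 0 ≤ z →
      S z ≤ 4 * (1 - stdNormalCDF ((z - M - c) / Real.sqrt M))) :
    ((∫ ω, Set.indicator {ω | R ≤ Y ω} Y ω ∂μ) = R * S R + (∫ z in Set.Ioi R, S z)) ∧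
      R * S R + (∫ z in Set.Ioi R, S z) ≤
        4 * (c + M) * (1 - stdNormalCDF ((R - M - c) / Real.sqrt M)) +
          4 * Real.sqrt M / Real.sqrt (2 * Real.pi) *
            Real.exp (-(R - M - c) ^ 2 / (2 * M)) := by
  obtain rfl : S = fun z => μ.real {ω | z ≤ Y ω} := funext hS
  have hR0 : 0 < R := by linarith
  have hs : 0 < √M := sqrt_pos.mpr hM
  simp only [sub_sub] at htail ⊢
  refine ⟨integral_indicator_setOf_le hYmeas hYint hR0, ?_⟩
  have hbound : ∀ z ∈ Ioi R,
      μ.real {ω | z ≤ Y ω} ≤ 4 * (1 - stdNormalCDF ((z - (M + c)) / √M)) :=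
    fun z hz => htail z (hR0.trans hz).le
  have hpdf : √M * stdNormalPDF ((R - (M + c)) / √M) =
      √M / √(2 * π) * exp (-(R - (M + c)) ^ 2 / (2 * M)) := by
    rw [stdNormalPDF, div_pow, sq_sqrt hM.le]
    field_simp
  calc R * μ.real {ω | R ≤ Y ω} + ∫ z in Ioi R, μ.real {ω | z ≤ Y ω}
      ≤ R * (4 * (1 - stdNormalCDF ((R - (M + c)) / √M))) +
          ∫ z in Ioi R, 4 * (1 - stdNormalCDF ((z - (M + c)) / √M)) := by
        refine add_le_add (mul_le_mul_of_nonneg_left (htail R hR0.le) hR0.le) ?_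
        exact integral_mono_of_nonneg (Eventually.of_forall fun _ => measureReal_nonneg)
          ((integrableOn_Ioi_one_sub_stdNormalCDF_div _ hs R).const_mul 4)
          ((ae_restrict_iff' measurableSet_Ioi).mpr (Eventually.of_forall hbound))
    _ = 4 * (c + M) * (1 - stdNormalCDF ((R - (M + c)) / √M)) +
          4 * (√M * stdNormalPDF ((R - (M + c)) / √M)) := by
        rw [integral_const_mul, integral_Ioi_one_sub_stdNormalCDF_div _ hs, stdNormalLoss]
        field_simp
        ring
    _ = _ := by rw [hpdf]; ring

/-- Tail expectation bound: if a nonnegative random variable `Y` has survival function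
`S(z) = P[Y ≥ z]` dominated by a Gaussian-type tail `4(1 - N((z - M - c)/√M))`, then for every
`R > M + c`,
`E[Y 1_{Y ≥ R}] = R S(R) + ∫_R^∞ S(z) dz ≤ 4(c+M)(1 - N((R-M-c)/√M)) + (4√M/√(2π)) e^{-(R-M-c)²/(2M)}`. -/
theorem tail_expectation_bound
    {Ω : Type*} [MeasurableSpace Ω] (μ : Measure Ω) [IsProbabilityMeasure μ]
    (Y : Ω → ℝ) (hYmeas : Measurable Y) (hYnonneg : ∀ ω, 0 ≤ Y ω)
    (hYint : Integrable Y μ)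
    (M c R : ℝ) (hM : 0 < M) (hc : 0 < c) (hR : M + c < R)
    (S : ℝ → ℝ) (hS : ∀ z, S z = (μ {ω | z ≤ Y ω}).toReal)
    (htail : ∀ z : ℝ, 0 ≤ z →
      S z ≤ 4 * (1 - stdNormalCDF ((z - M - c) / Real.sqrt M))) :
    ((∫ ω, Set.indicator {ω | R ≤ Y ω} Y ω ∂μ) = R * S R + (∫ z in Set.Ioi R, S z)) ∧
      R * S R + (∫ z in Set.Ioi R, S z) ≤
        4 * (c + M) * (1 - stdNormalCDF ((R - M - c) / Real.sqrt M)) +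
          4 * Real.sqrt M / Real.sqrt (2 * Real.pi) *
            Real.exp (-(R - M - c) ^ 2 / (2 * M)) :=
  tail_expectation_bound_general μ Y hYmeas hYint M c R hM hc hR S hS htail
end

section
/- Let f : E × F → ℝ ∪ {∞} be measurable with respect to the product Borel σ-field of Polish spaces E, F, let A ⊆ E × F be a measurable set whose projection to E is all of E, and let μ be a Borel probability measure on E. Define g(x) := inf{ f(x,y) : (x,y) ∈ A }. Then g is measurable with respect to the μ-completion of the Borel σ-field on E, and for every ε > 0 there exists a μ-completed-measurable map Y_ε : E → F such that for μ-a.e. x, (x, Y_ε(x)) ∈ A and f(x, Y_ε(x)) ≤ (g(x) + ε)·1_{g(x) > -∞} - (1/ε)·1_{g(x) = -∞}. -/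
/-!
Analytic sets are universally measurable. If `π : (ℕ → ℕ) → E` is continuous, continuity of the
outer measure along increasing unions bounds the coordinates one at a time by a sequence `m` at a
total loss of at most `δ` of the measure of `range π`; the box `∏ i, [0, m i]` is compact and its
image, which is closed, misses at most `δ` of `range π` (Choquet capacitability).

Choosing, in each fiber of a parametrization of an analytic set `B` by Baire space, the
lexicographically least point gives a selector whose level sets are built from analytic sets by
countable Boolean operations, hence are `μ`-measurable (Jankov–von Neumann).

For the theorem, `{g < c}` is the projection of the Borel set `A ∩ {f < c}`. With a Borel version
`g₀` of `g`, the set of `(x, y) ∈ A` with `f (x, y)` below the `ε`-level of `g₀ x` is Borel, and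
its projection contains every `x` with `g₀ x = g x`; any selector of it does the job.
-/

open MeasureTheory Set Filter Topology PiNat
open scoped ENNReal

theorem Nat.sInf_eq_iff {s : Set ℕ} {k : ℕ} :
    sInf s = k ↔ (k ∈ s ∧ ∀ j < k, j ∉ s) ∨ (s = ∅ ∧ k = 0) := by
  rcases s.eq_empty_or_nonempty with rfl | hs
  · simp [eq_comm]
  refine ⟨?_, ?_⟩
  · rintro rfl
    exact .inl ⟨Nat.sInf_mem hs, fun j hj hjs => (Nat.sInf_le hjs).not_gt hj⟩
  · rintro (⟨hk, hmin⟩ | ⟨rfl, -⟩)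
    · exact le_antisymm (Nat.sInf_le hk) (not_lt.1 fun h => hmin _ h (Nat.sInf_mem hs))
    · simp at hs

theorem measurable_sInf_nat {X : Type*} [MeasurableSpace X] {A : X → Set ℕ}
    (hA : ∀ k, MeasurableSet {x | k ∈ A x}) : Measurable fun x => sInf (A x) := by
  refine measurable_to_countable' fun k => ?_
  have hempty : MeasurableSet {x | A x = ∅} := by
    simpa only [Set.eq_empty_iff_forall_notMem, ofPred_forall, compl_ofPred] using
      MeasurableSet.iInter fun j => (hA j).compl
  simp only [preimage, mem_singleton_iff, Nat.sInf_eq_iff, ofPred_or, ofPred_and]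
  refine ((hA k).inter ?_).union (hempty.inter (.const _))
  simpa only [ofPred_forall, compl_ofPred] using
    MeasurableSet.iInter fun j => .iInter fun _ => (hA j).compl

namespace PiNat

section LexMin

/-- Greedy choice of the smallest available coordinate, one coordinate at a time: `lexMin C` is
the lexicographically least element of a nonempty closed `C` (and `lexMin ∅ = 0`). -/
noncomputable def lexMinCandidates (C : Set (ℕ → ℕ)) : ℕ → Set (ℕ → ℕ)
  | 0 => C
  | n + 1 => {σ ∈ lexMinCandidates C n | σ n = sInf ((fun τ => τ n) '' lexMinCandidates C n)}

noncomputable def lexMin (C : Set (ℕ → ℕ)) (n : ℕ) : ℕ :=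
  sInf ((fun τ => τ n) '' lexMinCandidates C n)

variable {C : Set (ℕ → ℕ)}

theorem lexMinCandidates_succ (C : Set (ℕ → ℕ)) (n : ℕ) :
    lexMinCandidates C (n + 1) = lexMinCandidates C n ∩ {σ | σ n = lexMin C n} := rfl

theorem lexMinCandidates_eq (C : Set (ℕ → ℕ)) (n : ℕ) :
    lexMinCandidates C n = C ∩ cylinder (lexMin C) n := by
  induction n with
  | zero => simp [lexMinCandidates]
  | succ n ih =>
    ext σ
    simp only [lexMinCandidates_succ, ih, mem_inter_iff, mem_cylinder_iff, mem_ofPred_eq,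
      Nat.lt_succ_iff_lt_or_eq, or_imp, forall_and, forall_eq, and_assoc]

theorem lexMinCandidates_nonempty (hC : C.Nonempty) (n : ℕ) :
    (lexMinCandidates C n).Nonempty := by
  induction n with
  | zero => exact hC
  | succ n ih =>
    obtain ⟨σ, hσ, hσn⟩ := Nat.sInf_mem (ih.image fun τ => τ n)
    exact ⟨σ, hσ, hσn⟩

theorem lexMin_mem (hC : IsClosed C) (hne : C.Nonempty) : lexMin C ∈ C := by
  choose σ hσ using lexMinCandidates_nonempty hne
  simp only [lexMinCandidates_eq, mem_inter_iff, mem_cylinder_iff] at hσ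
  refine hC.mem_of_tendsto (b := atTop) (f := σ) (tendsto_pi_nhds.2 fun i => ?_)
    (.of_forall fun n => (hσ n).1)
  exact tendsto_atTop_of_eventually_const (i₀ := i + 1) fun n hn => (hσ n).2 i hn

end LexMin

section Measurable

variable {X : Type*} [MeasurableSpace X] {C : X → Set (ℕ → ℕ)}

theorem measurable_lexMin_apply {n : ℕ}
    (hC : ∀ S, IsClosed S → MeasurableSet {x | (lexMinCandidates (C x) n ∩ S).Nonempty}) :
    Measurable fun x => lexMin (C x) n := by
  refine measurable_sInf_nat fun k => ?_
  simpa only [mem_image, Set.Nonempty, mem_inter_iff, mem_ofPred_eq] using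
    hC _ (isClosed_eq (continuous_apply n) continuous_const)

theorem measurableSet_nonempty_lexMinCandidates_inter
    (hC : ∀ S, IsClosed S → MeasurableSet {x | (C x ∩ S).Nonempty}) (n : ℕ) :
    ∀ S, IsClosed S → MeasurableSet {x | (lexMinCandidates (C x) n ∩ S).Nonempty} := by
  induction n with
  | zero => exact hC
  | succ n ih =>
    intro S hS
    have : {x | (lexMinCandidates (C x) (n + 1) ∩ S).Nonempty} = ⋃ k : ℕ,
        {x | lexMin (C x) n = k} ∩
          {x | (lexMinCandidates (C x) n ∩ ({σ | σ n = k} ∩ S)).Nonempty} := by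
      ext x
      simp only [lexMinCandidates_succ, inter_assoc, mem_ofPred_eq, mem_iUnion, mem_inter_iff,
        exists_eq_left']
    rw [this]
    exact .iUnion fun k => (measurable_lexMin_apply ih (measurableSet_singleton k)).inter
      (ih _ ((isClosed_eq (continuous_apply n) continuous_const).inter hS))

theorem measurable_lexMin (hC : ∀ S, IsClosed S → MeasurableSet {x | (C x ∩ S).Nonempty}) :
    Measurable fun x => lexMin (C x) :=
  measurable_pi_lambda _ fun n =>
    measurable_lexMin_apply (measurableSet_nonempty_lexMinCandidates_inter hC n)

end Measurable

end PiNat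

section
variable {α ι : Type*} [MeasurableSpace α] {μ : Measure α}

theorem Monotone.exists_measure_iUnion_le_add [Preorder ι] [IsDirectedOrder ι] [Nonempty ι]
    [(atTop : Filter ι).IsCountablyGenerated] {s : ι → Set α} (hs : Monotone s)
    (hfin : μ (⋃ k, s k) ≠ ∞) {ε : ℝ≥0∞} (hε : ε ≠ 0) : ∃ k, μ (⋃ k, s k) ≤ μ (s k) + ε := by
  rw [hs.measure_iUnion] at hfin ⊢
  obtain ⟨k, hk⟩ := lt_iSup_iff.1 ((ENNReal.lt_add_right hfin hε).trans_eq (ENNReal.iSup_add _))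
  exact ⟨k, hk.le⟩

theorem MeasureTheory.NullMeasurableSet.of_forall_exists_subset_le_add [IsFiniteMeasure μ]
    {s : Set α} (h : ∀ δ : ℝ≥0∞, δ ≠ 0 → ∃ t ⊆ s, MeasurableSet t ∧ μ s ≤ μ t + δ) :
    NullMeasurableSet s μ := by
  choose t hts ht hμt using fun n : ℕ => h (n : ℝ≥0∞)⁻¹ (ENNReal.inv_ne_zero.2 (by simp))
  have hle : μ s ≤ μ (⋃ n, t n) := by
    refine ENNReal.le_of_forall_pos_le_add fun ε hε _ => ?_
    obtain ⟨n, hn⟩ := ENNReal.exists_inv_nat_lt (a := ε) (by exact_mod_cast hε.ne')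
    exact (hμt n).trans (add_le_add (measure_mono (subset_iUnion t n)) hn.le)
  exact (MeasurableSet.iUnion ht).nullMeasurableSet.congr
    (ae_eq_of_subset_of_measure_ge (iUnion_subset hts) hle
      (MeasurableSet.iUnion ht).nullMeasurableSet (measure_ne_top μ s))

theorem exists_measure_range_le_image_box (π : (ℕ → ℕ) → α) [IsFiniteMeasure μ] {δ : ℝ≥0∞}
    (hδ : δ ≠ 0) : ∃ m : ℕ → ℕ, ∀ n, μ (range π) ≤ μ (π '' {σ | ∀ i < n, σ i ≤ m i}) + δ := by
  obtain ⟨η, hη, hηδ⟩ := ENNReal.exists_pos_sum_of_countable hδ ℕ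
  have step : ∀ (i : ℕ) (S : Set (ℕ → ℕ)),
      ∃ k, μ (π '' S) ≤ μ (π '' (S ∩ {σ | σ i ≤ k})) + η i := fun i S => by
    have hmono : Monotone fun k => π '' (S ∩ {σ | σ i ≤ k}) := fun a b hab =>
      image_mono (inter_subset_inter_right _ fun σ hσ => le_trans hσ hab)
    have hunion : ⋃ k, π '' (S ∩ {σ | σ i ≤ k}) = π '' S := by
      rw [← image_iUnion, ← inter_iUnion,
        iUnion_eq_univ_iff.2 fun σ => ⟨σ i, show σ i ≤ σ i from le_rfl⟩, inter_univ]
    simpa only [hunion] using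
      hmono.exists_measure_iUnion_le_add (measure_ne_top _ _) (by exact_mod_cast (hη i).ne')
  choose M hM using step
  let D : ℕ → Set (ℕ → ℕ) := fun n => Nat.rec univ (fun i Di => Di ∩ {σ | σ i ≤ M i Di}) n
  have hD : ∀ n, D n = {σ | ∀ i < n, σ i ≤ M i (D i)} := fun n => by
    induction n with
    | zero => simp [D]
    | succ n ih =>
      ext σ
      simp only [D] at ih ⊢
      simp only [ih, mem_inter_iff, mem_ofPred_eq, Nat.lt_succ_iff_lt_or_eq, or_imp, forall_and,
        forall_eq]
  have hsum : ∀ n, μ (range π) ≤ μ (π '' D n) + ∑ i ∈ Finset.range n, (η i : ℝ≥0∞) := fun n => by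
    induction n with
    | zero => simp [D]
    | succ n ih =>
      calc μ (range π) ≤ μ (π '' D n) + ∑ i ∈ Finset.range n, (η i : ℝ≥0∞) := ih
        _ ≤ μ (π '' D (n + 1)) + η n + ∑ i ∈ Finset.range n, (η i : ℝ≥0∞) := by
          gcongr; exact hM n _
        _ = μ (π '' D (n + 1)) + ∑ i ∈ Finset.range (n + 1), (η i : ℝ≥0∞) := by
          rw [Finset.sum_range_succ]; ring
  refine ⟨fun i => M i (D i), fun n => (hsum n).trans ?_⟩
  rw [← hD]
  gcongr
  exact (ENNReal.sum_le_tsum _).trans hηδ.le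

end

section Capacity

variable {E : Type*} [TopologicalSpace E] {π : (ℕ → ℕ) → E}

theorem PiNat.exists_cylinder_subset_of_mem_nhds {U : Set (ℕ → ℕ)} {σ : ℕ → ℕ} (hU : U ∈ 𝓝 σ) :
    ∃ n, cylinder σ n ⊆ U := by
  obtain ⟨_, ⟨τ, n, rfl⟩, hσ, hsub⟩ :=
    (isTopologicalBasis_cylinders fun _ => ℕ).mem_nhds_iff.1 hU
  exact ⟨n, (mem_cylinder_iff_eq.1 hσ).symm ▸ hsub⟩

theorem PiNat.eq_of_forall_mem_closure_image_cylinder [T2Space E] (hπ : Continuous π) {σ : ℕ → ℕ}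
    {x : E} (h : ∀ n, x ∈ closure (π '' cylinder σ n)) : π σ = x := by
  by_contra hne
  obtain ⟨U, V, hU, hV, hσU, hxV, hUV⟩ := t2_separation hne
  obtain ⟨n, hn⟩ := exists_cylinder_subset_of_mem_nhds (hπ.continuousAt (hU.mem_nhds hσU))
  obtain ⟨_, hxV', τ, hτ, rfl⟩ := mem_closure_iff.1 (h n) V hV hxV
  exact hUV.ne_of_mem (hn hτ) hxV' rfl

theorem IsCompact.isClosed_biUnion_cylinder {K : Set (ℕ → ℕ)} (hK : IsCompact K)
    {T : Set (ℕ → ℕ) → Set E} (hT : ∀ s, IsClosed (T s)) (n : ℕ) :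
    IsClosed (⋃ σ ∈ K, T (cylinder σ n)) := by
  obtain ⟨t, htK, hKt⟩ := hK.elim_nhds_subcover (fun σ => cylinder σ n)
    fun σ _ => (isOpen_cylinder _ σ n).mem_nhds (self_mem_cylinder σ n)
  have : ⋃ σ ∈ K, T (cylinder σ n) = ⋃ τ ∈ t, T (cylinder τ n) := by
    refine subset_antisymm (iUnion₂_subset fun σ hσ => ?_) (iUnion₂_subset fun τ hτ => ?_)
    · obtain ⟨τ, hτ, hστ⟩ := mem_iUnion₂.1 (hKt hσ)
      exact mem_cylinder_iff_eq.1 hστ ▸ subset_biUnion_of_mem (u := fun τ => T (cylinder τ n)) hτ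
    · exact subset_biUnion_of_mem (u := fun σ => T (cylinder σ n)) (htK τ hτ)
  rw [this]
  exact isClosed_biUnion_finset fun τ _ => hT _

theorem IsCompact.iInter_biUnion_closure_image_cylinder_subset [T2Space E] (hπ : Continuous π)
    {K : Set (ℕ → ℕ)} (hK : IsCompact K) :
    ⋂ n, ⋃ σ ∈ K, closure (π '' cylinder σ n) ⊆ π '' K := by
  intro x hx
  simp only [mem_iInter, mem_iUnion₂] at hx
  set S : ℕ → Set (ℕ → ℕ) := fun n => K ∩ {σ | x ∈ closure (π '' cylinder σ n)}
  have hS_closed : ∀ n, IsClosed (S n) := fun n => by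
    refine hK.isClosed.inter (isOpen_compl_iff.1 (isOpen_iff_mem_nhds.2 fun σ hσ => ?_))
    refine mem_of_superset ((isOpen_cylinder _ σ n).mem_nhds (self_mem_cylinder σ n)) ?_
    intro τ hτ
    simpa [mem_cylinder_iff_eq.1 hτ] using hσ
  obtain ⟨σ, hσ⟩ := IsCompact.nonempty_iInter_of_sequence_nonempty_isCompact_isClosed S
    (fun n σ hσ => ⟨hσ.1, closure_mono (image_mono (cylinder_anti σ n.le_succ)) hσ.2⟩)
    (fun n => by obtain ⟨σ, hσ, h⟩ := hx n; exact ⟨σ, hσ, h⟩)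
    (hK.of_isClosed_subset (hS_closed 0) inter_subset_left) hS_closed
  simp only [mem_iInter] at hσ
  exact ⟨σ, (hσ 0).1, eq_of_forall_mem_closure_image_cylinder hπ fun n => (hσ n).2⟩

variable [MeasurableSpace E] {μ : Measure E}

theorem exists_isCompact_measure_range_le_add [T2Space E] [OpensMeasurableSpace E]
    [IsFiniteMeasure μ] (hπ : Continuous π) {δ : ℝ≥0∞} (hδ : δ ≠ 0) :
    ∃ K, IsCompact K ∧ μ (range π) ≤ μ (π '' K) + δ := by
  obtain ⟨m, hm⟩ := exists_measure_range_le_image_box (μ := μ) π hδ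
  set K : Set (ℕ → ℕ) := univ.pi fun i => Iic (m i)
  have hK : IsCompact K := isCompact_univ_pi fun i => (finite_Iic _).isCompact
  set F : ℕ → Set E := fun n => ⋃ σ ∈ K, closure (π '' cylinder σ n)
  have hF_anti : Antitone F := fun a b hab =>
    iUnion₂_mono fun σ _ => closure_mono (image_mono (cylinder_anti σ hab))
  have hF_meas : ∀ n, NullMeasurableSet (F n) μ := fun n =>
    (hK.isClosed_biUnion_cylinder (fun _ => isClosed_closure) n).measurableSet.nullMeasurableSet
  have hbox : ∀ n, π '' {σ | ∀ i < n, σ i ≤ m i} ⊆ F n := by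
    rintro n _ ⟨σ, hσ, rfl⟩
    refine mem_iUnion₂.2 ⟨fun i => if i < n then σ i else 0, fun i _ => ?_,
      subset_closure ⟨σ, fun i hi => by simp [hi], rfl⟩⟩
    by_cases hi : i < n <;> simp [hi, hσ i]
  refine ⟨K, hK, ?_⟩
  calc μ (range π) ≤ ⨅ n, (μ (F n) + δ) :=
        le_iInf fun n => (hm n).trans (by gcongr; exact hbox n)
    _ = μ (⋂ n, F n) + δ := by
        rw [← ENNReal.iInf_add, hF_anti.measure_iInter hF_meas ⟨0, measure_ne_top _ _⟩]
    _ ≤ μ (π '' K) + δ := by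
        gcongr; exact hK.iInter_biUnion_closure_image_cylinder_subset hπ

theorem MeasureTheory.AnalyticSet.nullMeasurableSet [T2Space E] [OpensMeasurableSpace E]
    [IsFiniteMeasure μ] {s : Set E} (hs : AnalyticSet s) : NullMeasurableSet s μ := by
  rw [AnalyticSet] at hs
  obtain rfl | ⟨π, hπ, rfl⟩ := hs
  · exact .empty
  refine .of_forall_exists_subset_le_add fun δ hδ => ?_
  obtain ⟨K, hK, hle⟩ := exists_isCompact_measure_range_le_add (μ := μ) hπ hδ
  exact ⟨π '' K, image_subset_range _ _, (hK.image hπ).isClosed.measurableSet, hle⟩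

end Capacity

theorem MeasureTheory.AnalyticSet.exists_nullMeasurable_selection {E F : Type*}
    [TopologicalSpace E] [T2Space E] [MeasurableSpace E] [OpensMeasurableSpace E]
    [TopologicalSpace F] [MeasurableSpace F] [BorelSpace F] [Nonempty F]
    (μ : Measure E) [IsFiniteMeasure μ]
    {B : Set (E × F)} (hB : AnalyticSet B) :
    ∃ Y : E → F, NullMeasurable Y μ ∧ ∀ x ∈ Prod.fst '' B, (x, Y x) ∈ B := by
  rw [AnalyticSet] at hB
  obtain rfl | ⟨h, hh, rfl⟩ := hB
  · exact ⟨fun _ => Classical.arbitrary F, measurable_const.nullMeasurable, by simp⟩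
  have hπ : Continuous (Prod.fst ∘ h) := continuous_fst.comp hh
  let C : E → Set (ℕ → ℕ) := fun x => (Prod.fst ∘ h) ⁻¹' {x}
  have hC : NullMeasurable (fun x => lexMin (C x)) μ :=
    measurable_lexMin fun S hS => by
      have : {x | (C x ∩ S).Nonempty} = (Prod.fst ∘ h) '' S := by
        ext x; simp [C, Set.Nonempty, and_comm]
      change NullMeasurableSet {x : E | (C x ∩ S).Nonempty} μ
      rw [this]
      exact (hS.analyticSet.image_of_continuous hπ).nullMeasurableSet
  refine ⟨fun x => (h (lexMin (C x))).2, ((continuous_snd.comp hh).measurable.comp hC), ?_⟩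
  rintro x ⟨_, ⟨σ, rfl⟩, rfl⟩
  have hmem : lexMin (C (h σ).1) ∈ C (h σ).1 :=
    lexMin_mem (isClosed_singleton.preimage hπ) ⟨σ, rfl⟩
  exact ⟨lexMin (C (h σ).1), Prod.ext hmem rfl⟩

theorem nullMeasurable_sInf_section {E F α : Type*} [TopologicalSpace E] [PolishSpace E]
    [MeasurableSpace E] [BorelSpace E] [TopologicalSpace F] [PolishSpace F] [MeasurableSpace F]
    [BorelSpace F] [CompleteLinearOrder α] [TopologicalSpace α] [OrderTopology α]
    [SecondCountableTopology α] [MeasurableSpace α] [BorelSpace α]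
    (μ : Measure E) [IsFiniteMeasure μ] {f : E × F → α} (hf : Measurable f)
    {A : Set (E × F)} (hA : MeasurableSet A) :
    NullMeasurable (fun x => sInf {z | ∃ y, (x, y) ∈ A ∧ f (x, y) = z}) μ := by
  refine measurable_of_Iio fun c => ?_
  change NullMeasurableSet ((fun x => sInf {z | ∃ y, (x, y) ∈ A ∧ f (x, y) = z}) ⁻¹' Iio c) μ
  have : (fun x => sInf {z | ∃ y, (x, y) ∈ A ∧ f (x, y) = z}) ⁻¹' Iio c =
      Prod.fst '' (A ∩ f ⁻¹' Iio c) := by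
    ext x
    simp [sInf_lt_iff]
  rw [this]
  exact ((hA.inter (hf measurableSet_Iio)).analyticSet.image_of_continuous
    continuous_fst).nullMeasurableSet

/-- The paper's `(a + ε) 1_{a > -∞} - (1/ε) 1_{a = -∞}`. -/
noncomputable def epsOptimalLevel (ε : ℝ) (a : EReal) : EReal :=
  if a = ⊥ then ((-(1 / ε) : ℝ) : EReal) else a + (ε : EReal)

theorem measurable_epsOptimalLevel (ε : ℝ) : Measurable (epsOptimalLevel ε) :=
  Measurable.ite (measurableSet_singleton ⊥) measurable_const (by fun_prop)

theorem exists_mem_le_epsOptimalLevel_sInf {S : Set EReal} (hS : S.Nonempty) {ε : ℝ}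
    (hε : 0 < ε) : ∃ z ∈ S, z ≤ epsOptimalLevel ε (sInf S) := by
  have key : ∀ b, sInf S < b → ∃ z ∈ S, z ≤ b := fun b hb =>
    (sInf_lt_iff.1 hb).imp fun _ h => ⟨h.1, h.2.le⟩
  unfold epsOptimalLevel
  split_ifs with hbot
  · exact key _ (hbot ▸ EReal.bot_lt_coe _)
  rcases eq_or_ne (sInf S) ⊤ with htop | htop
  · obtain ⟨z, hz⟩ := hS
    exact ⟨z, hz, by simp [htop]⟩
  obtain ⟨r, hr⟩ : ∃ r : ℝ, sInf S = r := ⟨_, (EReal.coe_toReal htop hbot).symm⟩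
  exact key _ (by rw [hr]; exact_mod_cast lt_add_of_pos_right r hε)

theorem measurable_selection_eps_optimizer_general
    {E F : Type*}
    [TopologicalSpace E] [PolishSpace E] [MeasurableSpace E] [BorelSpace E]
    [TopologicalSpace F] [PolishSpace F] [MeasurableSpace F] [BorelSpace F]
    (μ : Measure E) [IsProbabilityMeasure μ]
    (f : E × F → EReal) (hf : Measurable f)
    (A : Set (E × F)) (hA : MeasurableSet A)
    (hproj : ∀ x : E, ∃ y : F, (x, y) ∈ A)
    (g : E → EReal)
    (hg : ∀ x, g x = sInf {z : EReal | ∃ y : F, (x, y) ∈ A ∧ f (x, y) = z}) :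
    NullMeasurable g μ ∧
      ∀ ε : ℝ, 0 < ε → ∃ Y : E → F, NullMeasurable Y μ ∧
        ∀ᵐ x ∂μ, (x, Y x) ∈ A ∧
          f (x, Y x) ≤ if g x = ⊥ then ((-(1 / ε) : ℝ) : EReal) else g x + (ε : EReal) := by
  have hgm : NullMeasurable g μ := by
    simpa only [← hg] using nullMeasurable_sInf_section μ hf hA
  refine ⟨hgm, fun ε hε => ?_⟩
  obtain ⟨g₀, hg₀, hgg₀⟩ := hgm.aemeasurable
  let B := A ∩ {p | f p ≤ epsOptimalLevel ε (g₀ p.1)}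
  have hB : MeasurableSet B := hA.inter <|
    measurableSet_le hf ((measurable_epsOptimalLevel ε).comp (hg₀.comp measurable_fst))
  have : Nonempty F := (nonempty_of_isProbabilityMeasure μ).elim fun x => ⟨(hproj x).choose⟩
  obtain ⟨Y, hY, hYB⟩ := hB.analyticSet.exists_nullMeasurable_selection μ
  refine ⟨Y, hY, ?_⟩
  filter_upwards [hgg₀] with x hx
  obtain ⟨y₀, hy₀⟩ := hproj x
  obtain ⟨_, ⟨y, hyA, rfl⟩, hy⟩ := exists_mem_le_epsOptimalLevel_sInf
    (S := {z | ∃ y, (x, y) ∈ A ∧ f (x, y) = z}) ⟨_, y₀, hy₀, rfl⟩ hε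
  rw [← hg, hx] at hy
  rw [hx]
  exact hYB x ⟨(x, y), ⟨hyA, hy⟩, rfl⟩

/-- Measurable selection of `ε`-optimizers: for a Borel measurable
`f : E × F → ℝ ∪ {∞}` on a product of Polish spaces, a measurable set `A ⊆ E × F` with full
projection on `E`, and a Borel probability measure `μ` on `E`, the function
`g(x) = inf { f(x,y) : (x,y) ∈ A }` is measurable for the `μ`-completed σ-field, and for every
`ε > 0` there is a `μ`-completed-measurable selection `Y_ε` with `(x, Y_ε x) ∈ A` μ-a.e. and
`f(x, Y_ε x) ≤ (g x + ε) 1_{g x > -∞} - (1/ε) 1_{g x = -∞}` μ-a.e. -/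
theorem measurable_selection_eps_optimizer
    {E F : Type*}
    [TopologicalSpace E] [PolishSpace E] [MeasurableSpace E] [BorelSpace E]
    [TopologicalSpace F] [PolishSpace F] [MeasurableSpace F] [BorelSpace F]
    (μ : Measure E) [IsProbabilityMeasure μ]
    (f : E × F → EReal) (hf : Measurable f)
    -- f takes values in ℝ ∪ {∞}
    (hf_ne_bot : ∀ p, f p ≠ ⊥)
    (A : Set (E × F)) (hA : MeasurableSet A)
    (hproj : ∀ x : E, ∃ y : F, (x, y) ∈ A)
    (g : E → EReal)
    (hg : ∀ x, g x = sInf {z : EReal | ∃ y : F, (x, y) ∈ A ∧ f (x, y) = z}) :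
    NullMeasurable g μ ∧
      ∀ ε : ℝ, 0 < ε → ∃ Y : E → F, NullMeasurable Y μ ∧
        ∀ᵐ x ∂μ, (x, Y x) ∈ A ∧
          f (x, Y x) ≤ if g x = ⊥ then ((-(1 / ε) : ℝ) : EReal) else g x + (ε : EReal) :=
  measurable_selection_eps_optimizer_general μ f hf A hA hproj g hg
end

section
/- Let L : [0,1] × Ω × U → ℝ⁺ satisfy the uniform time-continuity condition: Δ_t L(ε) := sup{ |L(s,x,u) - L(t,x,u)| / (1 + L(t,x,u)) : |t - s| ≤ ε, x ∈ Ω, u ∈ U } → 0 as ε → 0. Then for every ε < 1, every x ∈ Ω, and every measurable process η with values in ℝ^{d²+d}, the inequality ∫_0^1 L(s, x, η_s) ds ≥ (1/(1 + Δ_t L(ε))) ∫_0^{1-ε} L(s, x, (1/ε)∫_s^{s+ε} η_t dt) ds - Δ_t L(ε) holds, provided L(t, x, ·) is convex on the convex set U for each (t, x). -/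
/-!
Jensen's inequality on the window `[s, s + ε]` bounds `L(s, x, ⨍ η)` by the window average of
`L(s, x, η_t)`, and the time modulus turns `L(s, x, η_t)` into at most
`(1 + Δ) L(t, x, η_t) + Δ`. Integrating over `s ∈ [0, 1 - ε]`, every time `t` is covered by
windows of total length at most `ε`, which gives the estimate.

As `L` is only convex, not continuous, on `U`, Jensen's inequality is needed for arbitrary
convex sets in finite dimension. If the barycenter `b` of a probability measure carried by a
convex set `C` were outside `C`, a supporting functional at `b ∈ closure C` would be a.e.
constant, so the measure would be carried by a slice of `C` of smaller dimension.
-/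

open MeasureTheory Set intervalIntegral
open scoped Pointwise

section Barycenter

variable {E : Type*} [NormedAddCommGroup E] [NormedSpace ℝ E] [FiniteDimensional ℝ E]

theorem Convex.exists_forall_le_of_mem_closure_of_notMem {C : Set E} (hC : Convex ℝ C) {b : E}
    (hbC : b ∈ closure C) (hb : b ∉ C) :
    ∃ ℓ : StrongDual ℝ E, (∀ u ∈ C, ℓ u ≤ ℓ b) ∧ ∃ u ∈ C, ℓ u < ℓ b := by
  obtain ⟨c₀, hc₀⟩ : C.Nonempty := nonempty_of_mem (closure_nonempty_iff.mp ⟨b, hbC⟩ |>.some_mem)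
  -- Thickening `C` by a complement `W` of its direction gives a convex set with nonempty
  -- interior that still misses `b`.
  obtain ⟨W, hW⟩ := Submodule.exists_isCompl (vectorSpan ℝ C)
  set S := C + (W : Set E)
  have hS : Convex ℝ S := hC.add W.convex
  have hmemS : ∀ c ∈ C, ∀ w ∈ W, c + w ∈ S := fun c hc w hw => add_mem_add hc hw
  have hCS : C ⊆ S := fun c hc => add_zero c ▸ hmemS c hc 0 W.zero_mem
  have hbS : b ∉ S := by
    rintro ⟨c, hc, w, hw, rfl⟩
    have hbA : c + w ∈ affineSpan ℝ C :=
      closure_minimal (subset_affineSpan ℝ C) (affineSpan ℝ C).closed_of_finiteDimensional hbC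
    have hwV : w ∈ vectorSpan ℝ C := by
      simpa using vsub_mem_vectorSpan_of_mem_affineSpan_of_mem_affineSpan hbA
        (subset_affineSpan ℝ C hc)
    exact hb (by simpa [Submodule.disjoint_def.mp hW.disjoint w hwV hw] using hc)
  have hSspan : vectorSpan ℝ S = ⊤ := by
    refine eq_top_iff.mpr (hW.sup_eq_top ▸ sup_le (vectorSpan_mono ℝ hCS) fun w hw => ?_)
    simpa using vsub_mem_vectorSpan ℝ (hmemS c₀ hc₀ w hw) (hCS hc₀)
  have hSint : (interior S).Nonempty := by
    rw [hS.interior_nonempty_iff_affineSpan_eq_top,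
      AffineSubspace.affineSpan_eq_top_iff_vectorSpan_eq_top_of_nonempty ℝ _ _
        ⟨c₀, hCS hc₀⟩]
    exact hSspan
  obtain ⟨ℓ, hℓ⟩ := geometric_hahn_banach_open_point hS.interior isOpen_interior
    fun h => hbS (interior_subset h)
  have hleS : ∀ u ∈ S, ℓ u ≤ ℓ b := fun u hu =>
    closure_minimal (fun v hv => (hℓ v hv).le) (isClosed_le ℓ.continuous continuous_const)
      ((hS.closure_interior_eq_closure_of_nonempty_interior hSint).symm ▸ subset_closure hu)
  refine ⟨ℓ, fun u hu => hleS u (hCS hu), ?_⟩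
  obtain ⟨_, ⟨c, hc, w, hw, rfl⟩, hy⟩ : ∃ y ∈ S, y ∈ interior S :=
    hSint.imp fun y hy => ⟨interior_subset hy, hy⟩
  -- `c` is the midpoint of `c + w ∈ interior S` and `c - w ∈ S`.
  have h₁ := hℓ _ hy
  have h₂ := hleS _ (hmemS c hc (-w) (W.neg_mem hw))
  refine ⟨c, hc, ?_⟩
  rw [map_add] at h₁ h₂
  rw [map_neg] at h₂
  linarith

theorem vectorSpan_inter_preimage_lt {k V : Type*} [Field k] [AddCommGroup V] [Module k V]
    {C : Set V} (ℓ : V →ₗ[k] k) (r : k) {u v : V} (hu : u ∈ C) (hv : v ∈ C) (huv : ℓ u ≠ ℓ v) :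
    vectorSpan k (C ∩ ℓ ⁻¹' {r}) < vectorSpan k C := by
  refine lt_of_le_of_ne (vectorSpan_mono k inter_subset_left) fun h => huv ?_
  have hker : vectorSpan k (C ∩ ℓ ⁻¹' {r}) ≤ LinearMap.ker ℓ := by
    rw [vectorSpan_def, Submodule.span_le]
    rintro _ ⟨p, hp, q, hq, rfl⟩
    simp_all
  have huv_ker := hker (h ▸ vsub_mem_vectorSpan k hu hv)
  simpa [sub_eq_zero] using huv_ker

variable {α : Type*} [MeasurableSpace α] {μ : Measure α}

theorem Convex.integral_mem_of_finiteDimensional [IsProbabilityMeasure μ] {C : Set E}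
    (hC : Convex ℝ C) {ζ : α → E} (hζC : ∀ᵐ t ∂μ, ζ t ∈ C) (hζ : Integrable ζ μ) :
    ∫ t, ζ t ∂μ ∈ C := by
  induction hk : Module.finrank ℝ (vectorSpan ℝ C) using Nat.strong_induction_on generalizing C
    with | _ k ih =>
  set b := ∫ t, ζ t ∂μ
  by_contra hb
  have hbC : b ∈ closure C :=
    hC.closure.integral_mem isClosed_closure (hζC.mono fun _ => (subset_closure ·)) hζ
  obtain ⟨ℓ, hℓC, u₀, hu₀, hu₀b⟩ := hC.exists_forall_le_of_mem_closure_of_notMem hbC hb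
  -- `ℓ ∘ ζ` lies below its mean `ℓ b`, hence equals it almost everywhere.
  have hℓζ : ∀ᵐ t ∂μ, ℓ (ζ t) = ℓ b := by
    have hle : (fun t => ℓ (ζ t)) ≤ᵐ[μ] fun _ => ℓ b := hζC.mono fun t ht => hℓC _ ht
    refine (integral_eq_iff_of_ae_le (ℓ.integrable_comp hζ) (integrable_const _) hle).mp ?_
    simp [ℓ.integral_comp_comm hζ, b]
  set C' := C ∩ (ℓ : E →ₗ[ℝ] ℝ) ⁻¹' {ℓ b}
  have hζC' : ∀ᵐ t ∂μ, ζ t ∈ C' := hζC.and hℓζ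
  obtain ⟨t, htC, htb⟩ := hζC'.exists
  have hlt : vectorSpan ℝ C' < vectorSpan ℝ C :=
    vectorSpan_inter_preimage_lt _ _ htC hu₀ (by simp_all [hu₀b.ne'])
  have hC' : Convex ℝ C' := hC.inter (convex_hyperplane ℓ.isLinear _)
  exact hb (ih _ (hk ▸ Submodule.finrank_lt_finrank_of_lt hlt) hC' hζC' rfl).1

theorem Convex.average_mem_of_finiteDimensional [IsFiniteMeasure μ] [NeZero μ] {C : Set E}
    (hC : Convex ℝ C) {ζ : α → E} (hζC : ∀ᵐ t ∂μ, ζ t ∈ C) (hζ : Integrable ζ μ) :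
    ⨍ t, ζ t ∂μ ∈ C :=
  hC.integral_mem_of_finiteDimensional (Measure.smul_absolutelyContinuous.ae_le hζC)
    hζ.to_average

theorem ConvexOn.map_average_le_of_finiteDimensional [IsFiniteMeasure μ] [NeZero μ] {s : Set E}
    {g : E → ℝ} (hg : ConvexOn ℝ s g) {f : α → E} {φ : α → ℝ} (hfs : ∀ᵐ t ∂μ, f t ∈ s)
    (hgφ : ∀ᵐ t ∂μ, g (f t) ≤ φ t) (hf : Integrable f μ) (hφ : Integrable φ μ) :
    g (⨍ t, f t ∂μ) ≤ ⨍ t, φ t ∂μ :=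
  (average_pair hf hφ ▸ hg.convex_epigraph.average_mem_of_finiteDimensional
    (C := {p : E × ℝ | p.1 ∈ s ∧ g p.1 ≤ p.2}) (hfs.and hgφ) (hf.prodMk hφ)).2

theorem ConvexOn.map_interval_average_le {s : Set E} {g : E → ℝ} (hg : ConvexOn ℝ s g)
    {f : ℝ → E} {φ : ℝ → ℝ} {a b : ℝ} (hab : a < b) (hfs : ∀ t ∈ Ioc a b, f t ∈ s)
    (hgφ : ∀ t ∈ Ioc a b, g (f t) ≤ φ t) (hf : IntegrableOn f (Ioc a b))
    (hφ : IntegrableOn φ (Ioc a b)) :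
    g (⨍ t in a..b, f t) ≤ ⨍ t in a..b, φ t := by
  rw [uIoc_of_le hab.le]
  have : NeZero (volume.restrict (Ioc a b)) := ⟨by simp [hab]⟩
  exact hg.map_average_le_of_finiteDimensional (ae_restrict_of_forall_mem measurableSet_Ioc hfs)
    (ae_restrict_of_forall_mem measurableSet_Ioc hgφ) hf hφ

end Barycenter

section MovingAverage

variable {f : ℝ → ℝ} {a b ε : ℝ}

theorem MonotoneOn.intervalIntegral_comp_add_right_sub_le {F : ℝ → ℝ}
    (hF : MonotoneOn F (Icc a b)) (hε : 0 ≤ ε) (hεb : a + ε ≤ b) :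
    ∫ s in a..b - ε, (F (s + ε) - F s) ≤ ε * (F b - F a) := by
  have hFi : ∀ c ∈ Icc a b, ∀ d ∈ Icc a b, IntervalIntegrable F volume c d :=
    fun c hc d hd => (hF.mono (uIcc_subset_Icc hc hd)).intervalIntegrable
  have ha : a ∈ Icc a b := ⟨le_rfl, by linarith⟩
  have hb : b ∈ Icc a b := ⟨by linarith, le_rfl⟩
  have haε : a + ε ∈ Icc a b := ⟨by linarith, hεb⟩
  have hbε : b - ε ∈ Icc a b := ⟨by linarith, by linarith⟩
  have hshift : ∫ s in a..b - ε, F (s + ε) = ∫ s in a + ε..b, F s := by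
    rw [integral_comp_add_right, sub_add_cancel]
  -- Only the two end windows survive: `∫_{b-ε}^b F - ∫_a^{a+ε} F`.
  have hends : ∫ s in a..b - ε, (F (s + ε) - F s) =
      (∫ s in b - ε..b, F s) - ∫ s in a..a + ε, F s := by
    rw [integral_sub (by simpa [hshift] using (hFi _ haε _ hb).comp_add_right ε) (hFi _ ha _ hbε),
      hshift, integral_interval_sub_interval_comm' (hFi _ haε _ hb) (hFi _ ha _ hbε)
        (hFi _ haε _ ha)]
  have hupper : ∫ s in b - ε..b, F s ≤ ε * F b := by
    simpa using integral_mono_on (by linarith) (hFi _ hbε _ hb) intervalIntegrable_const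
      fun s hs => hF ⟨by linarith [hs.1], hs.2⟩ hb hs.2
  have hlower : ε * F a ≤ ∫ s in a..a + ε, F s := by
    simpa using integral_mono_on (by linarith) intervalIntegrable_const (hFi _ ha _ haε)
      fun s hs => hF ha ⟨hs.1, by linarith [hs.2]⟩ hs.1
  rw [hends]
  linarith

theorem integral_add_right_eq_sub_primitive (hf : IntegrableOn f (Icc a b)) (hε : 0 ≤ ε)
    {s : ℝ} (hs : s ∈ Icc a (b - ε)) :
    ∫ t in s..s + ε, f t = (∫ t in a..s + ε, f t) - ∫ t in a..s, f t := by
  have hfi : ∀ c ∈ Icc a b, ∀ d ∈ Icc a b, IntervalIntegrable f volume c d :=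
    fun c hc d hd => (hf.mono_set (uIcc_subset_Icc hc hd)).intervalIntegrable
  have ha : a ∈ Icc a b := ⟨le_rfl, by linarith [hs.1, hs.2]⟩
  exact (integral_interval_sub_left (hfi _ ha _ ⟨by linarith [hs.1], by linarith [hs.2]⟩)
    (hfi _ ha _ ⟨hs.1, by linarith [hs.2]⟩)).symm

theorem intervalIntegrable_integral_add_right (hf : IntegrableOn f (Icc a b)) (hε : 0 ≤ ε)
    (hεb : a + ε ≤ b) :
    IntervalIntegrable (fun s => ∫ t in s..s + ε, f t) volume a (b - ε) := by
  have hF : ContinuousOn (fun r => ∫ t in a..r, f t) (Icc a b) := by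
    simpa [uIcc_of_le (show a ≤ b by linarith)] using
      continuousOn_primitive_interval (a := a) (b := b) (by rwa [uIcc_of_le (by linarith)])
  refine ContinuousOn.intervalIntegrable ?_
  rw [uIcc_of_le (by linarith)]
  refine ((hF.comp (continuous_add_const ε).continuousOn fun s hs => ?_).sub
    (hF.mono (Icc_subset_Icc le_rfl (by linarith)))).congr
    fun s hs => integral_add_right_eq_sub_primitive hf hε hs
  exact ⟨by linarith [hs.1], by linarith [hs.2]⟩

theorem integral_integral_add_right_le (hf₀ : ∀ t ∈ Icc a b, 0 ≤ f t)
    (hf : IntegrableOn f (Icc a b)) (hε : 0 ≤ ε) (hεb : a + ε ≤ b) :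
    ∫ s in a..b - ε, ∫ t in s..s + ε, f t ≤ ε * ∫ t in a..b, f t := by
  have hF : MonotoneOn (fun r => ∫ t in a..r, f t) (Icc a b) := fun r hr r' hr' hrr' => by
    rw [← sub_nonneg, integral_interval_sub_left
      (hf.mono_set (uIcc_subset_Icc ⟨le_rfl, hr.1.trans hr.2⟩ hr')).intervalIntegrable
      (hf.mono_set (uIcc_subset_Icc ⟨le_rfl, hr.1.trans hr.2⟩ hr)).intervalIntegrable]
    exact integral_nonneg hrr' fun t ht => hf₀ t ⟨hr.1.trans ht.1, ht.2.trans hr'.2⟩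
  calc ∫ s in a..b - ε, ∫ t in s..s + ε, f t
      = ∫ s in a..b - ε, ((∫ t in a..s + ε, f t) - ∫ t in a..s, f t) :=
        integral_congr fun s hs => integral_add_right_eq_sub_primitive hf hε
          (by rwa [uIcc_of_le (by linarith)] at hs)
    _ ≤ ε * ((∫ t in a..b, f t) - ∫ t in a..a, f t) :=
        hF.intervalIntegral_comp_add_right_sub_le hε hεb
    _ = ε * ∫ t in a..b, f t := by rw [integral_same, sub_zero]

end MovingAverage

theorem time_average_jensen_inequality_general
    {Ωs : Type*} (d : ℕ)
    (U : Set (Fin (d ^ 2 + d) → ℝ))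
    (L : ℝ → Ωs → (Fin (d ^ 2 + d) → ℝ) → ℝ)
    (hLnonneg : ∀ t x u, 0 ≤ L t x u)
    (hLconv : ∀ t x, ConvexOn ℝ U (L t x))
    -- `Δ` is the uniform time-modulus of continuity `Δ_t L`:
    (Δ : ℝ → ℝ) (hΔnonneg : ∀ ε, 0 ≤ Δ ε)
    (hΔ : ∀ ε : ℝ, 0 < ε → ∀ s t : ℝ, |t - s| ≤ ε → ∀ (x : Ωs) (u : _), u ∈ U →
      |L s x u - L t x u| ≤ Δ ε * (1 + L t x u))
    (ε : ℝ) (hε : 0 < ε) (hε1 : ε < 1) (x : Ωs)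
    (η : ℝ → (Fin (d ^ 2 + d) → ℝ))
    (hηU : ∀ t ∈ Set.Icc (0:ℝ) 1, η t ∈ U)
    (hηint : IntegrableOn η (Set.Icc 0 1) volume)
    (hint1 : IntegrableOn (fun s => L s x (η s)) (Set.Icc 0 1) volume)
    (hint2 : IntegrableOn (fun s => L s x ((1 / ε) • ∫ t in s..(s + ε), η t))
      (Set.Icc 0 (1 - ε)) volume) :
    (∫ s in (0:ℝ)..1, L s x (η s)) ≥
      (1 / (1 + Δ ε)) * (∫ s in (0:ℝ)..(1 - ε), L s x ((1 / ε) • ∫ t in s..(s + ε), η t))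
        - Δ ε := by
  set K := Δ ε
  have hK : 0 ≤ K := hΔnonneg ε
  set φ : ℝ → ℝ := fun t => (1 + K) * L t x (η t) + K
  have hφ : IntegrableOn φ (Icc 0 1) := (hint1.const_mul _).add (integrableOn_const (by simp))
  have hwindow : ∀ s ∈ Icc (0 : ℝ) (1 - ε), Ioc s (s + ε) ⊆ Icc 0 1 :=
    fun s hs t ht => ⟨by linarith [hs.1, ht.1], by linarith [hs.2, ht.2]⟩
  have hpointwise : ∀ s ∈ Icc (0 : ℝ) (1 - ε),
      L s x ((1 / ε) • ∫ t in s..s + ε, η t) ≤ 1 / ε * ∫ t in s..s + ε, φ t := by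
    intro s hs
    have hshift : ∀ t ∈ Ioc s (s + ε), L s x (η t) ≤ φ t := fun t ht => by
      have := (abs_le.mp (hΔ ε hε s t (abs_le.mpr ⟨by linarith [ht.1], by linarith [ht.2]⟩) x
        (η t) (hηU t (hwindow s hs ht)))).2
      linarith
    simpa [interval_average_eq] using (hLconv s x).map_interval_average_le (by linarith)
      (fun t ht => hηU t (hwindow s hs ht)) hshift (hηint.mono_set (hwindow s hs))
      (hφ.mono_set (hwindow s hs))
  have hφint : ∫ t in (0 : ℝ)..1, φ t = (1 + K) * (∫ t in (0 : ℝ)..1, L t x (η t)) + K := by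
    have h1 := (intervalIntegrable_iff_integrableOn_Icc_of_le zero_le_one).mpr hint1
    simp [φ, intervalIntegral.integral_add (h1.const_mul _) intervalIntegrable_const]
  have h1ε : (0 : ℝ) ≤ 1 - ε := by linarith
  have hA : ∫ s in (0 : ℝ)..1 - ε, L s x ((1 / ε) • ∫ t in s..s + ε, η t) ≤
      (1 + K) * (∫ t in (0 : ℝ)..1, L t x (η t)) + K :=
    calc _ ≤ ∫ s in (0 : ℝ)..1 - ε, 1 / ε * ∫ t in s..s + ε, φ t :=
          integral_mono_on h1ε ((intervalIntegrable_iff_integrableOn_Icc_of_le h1ε).mpr hint2)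
            ((intervalIntegrable_integral_add_right hφ hε.le (by linarith)).const_mul _)
            hpointwise
      _ = 1 / ε * ∫ s in (0 : ℝ)..1 - ε, ∫ t in s..s + ε, φ t := integral_const_mul _ _
      _ ≤ 1 / ε * (ε * ∫ t in (0 : ℝ)..1, φ t) := by
          gcongr
          exact integral_integral_add_right_le
            (fun t _ => add_nonneg (mul_nonneg (by linarith) (hLnonneg t x (η t))) hK) hφ hε.le
            (by linarith)
      _ = _ := by rw [hφint]; field_simp
  rw [ge_iff_le, one_div_mul_eq_div, sub_le_iff_le_add, div_le_iff₀ (by linarith)]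
  linarith [mul_nonneg hK hK]

/-- The key inequality (3.17)-type estimate: if `L` is nonnegative, convex in the control
variable `u ∈ U`, and has uniform time-modulus of continuity `Δ_t L`, then for every `ε < 1`,
every path `x` and every control process `η` with values in `U`,
`∫_0^1 L(s,x,η_s) ds ≥ (1/(1+Δ_t L(ε))) ∫_0^{1-ε} L(s,x,(1/ε)∫_s^{s+ε} η_t dt) ds - Δ_t L(ε)`. -/
theorem time_average_jensen_inequality
    {Ωs : Type*} (d : ℕ)
    (U : Set (Fin (d ^ 2 + d) → ℝ)) (hUconv : Convex ℝ U) (hUclosed : IsClosed U)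
    (L : ℝ → Ωs → (Fin (d ^ 2 + d) → ℝ) → ℝ)
    (hLnonneg : ∀ t x u, 0 ≤ L t x u)
    (hLconv : ∀ t x, ConvexOn ℝ U (L t x))
    -- `Δ` is the uniform time-modulus of continuity `Δ_t L`:
    (Δ : ℝ → ℝ) (hΔnonneg : ∀ ε, 0 ≤ Δ ε)
    (hΔ : ∀ ε : ℝ, 0 < ε → ∀ s t : ℝ, |t - s| ≤ ε → ∀ (x : Ωs) (u : _), u ∈ U →
      |L s x u - L t x u| ≤ Δ ε * (1 + L t x u))
    (hΔ0 : Filter.Tendsto Δ (nhdsWithin 0 (Set.Ioi 0)) (nhds 0))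
    (ε : ℝ) (hε : 0 < ε) (hε1 : ε < 1) (x : Ωs)
    (η : ℝ → (Fin (d ^ 2 + d) → ℝ)) (hηmeas : Measurable η)
    (hηU : ∀ t ∈ Set.Icc (0:ℝ) 1, η t ∈ U)
    (hηint : IntegrableOn η (Set.Icc 0 1) volume)
    (hint1 : IntegrableOn (fun s => L s x (η s)) (Set.Icc 0 1) volume)
    (hint2 : IntegrableOn (fun s => L s x ((1 / ε) • ∫ t in s..(s + ε), η t))
      (Set.Icc 0 (1 - ε)) volume) :
    (∫ s in (0:ℝ)..1, L s x (η s)) ≥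
      (1 / (1 + Δ ε)) * (∫ s in (0:ℝ)..(1 - ε), L s x ((1 / ε) • ∫ t in s..(s + ε), η t))
        - Δ ε :=
  time_average_jensen_inequality_general d U L hLnonneg hLconv Δ hΔnonneg hΔ ε hε hε1 x η hηU hηint
    hint1 hint2
end
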